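/- With L(λ) = Γ(γ(λ))/λ^{γ(λ)} where λ = exp(ψ(γ(λ))), as λ → +∞ one has ln L(λ) = -λ(1 + o(1)); in particular, lim_{λ→∞} (ln L(λ))/λ = -1. -/

import Mathlib

open Real Filter Set

/-- The digamma function `ψ = Γ'/Γ`. -/
noncomputable def digamma (x : ℝ) : ℝ := deriv Real.Gamma x / Real.Gamma x

/-!
`log ∘ Γ` is convex with derivative `ψ`, so its tangent lines give `log (x - 1) ≤ ψ x ≤ log x`,
and comparing derivatives gives `(x - 1) log (x - 1) - (x - 1) ≤ log Γ x ≤ x log x - x + 1` for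
`x ≥ 1`. For `x = γ(λ)` we have `log L(λ) = log Γ x - x ψ x`. The tangent line at `x`, evaluated
at `λ`, bounds this above by `log Γ λ - λ log λ ≤ 1 - λ`; the lower bound on `log Γ x` together
with the Fenchel–Young inequality `t log λ - λ ≤ t log t - t` bounds it below by `-λ - log λ`.
-/

open Topology

theorem ConvexOn.add_mul_sub_le_of_hasDerivAt {S : Set ℝ} {f : ℝ → ℝ} {f' x y : ℝ}
    (hf : ConvexOn ℝ S f) (hx : x ∈ S) (hy : y ∈ S) (hf' : HasDerivAt f f' x) :
    f x + f' * (y - x) ≤ f y := by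
  rcases lt_trichotomy x y with hxy | rfl | hyx
  · have := hf.le_slope_of_hasDerivAt hx hy hxy hf'
    rw [slope_def_field, le_div_iff₀ (sub_pos.2 hxy)] at this
    linarith
  · simp
  · have := hf.slope_le_of_hasDerivAt hy hx hyx hf'
    rw [slope_def_field, div_le_iff₀ (sub_pos.2 hyx)] at this
    linarith

theorem mul_log_sub_le_mul_log_sub {t lam : ℝ} (ht : 0 ≤ t) (hlam : 0 < lam) :
    t * log lam - lam ≤ t * log t - t := by
  rcases ht.eq_or_lt with rfl | ht
  · simpa using hlam.le
  · have := log_le_sub_one_of_pos (div_pos hlam ht)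
    rw [log_div hlam.ne' ht.ne', le_sub_iff_add_le, le_div_iff₀ ht] at this
    linarith

theorem hasDerivAt_log_Gamma {x : ℝ} (hx : 0 < x) :
    HasDerivAt (fun y => log (Gamma y)) (digamma x) x := by
  have hΓ : DifferentiableAt ℝ Gamma x :=
    differentiableAt_Gamma fun m => ((neg_nonpos.2 m.cast_nonneg).trans_lt hx).ne'
  exact hΓ.hasDerivAt.log (Gamma_pos_of_pos hx).ne'

theorem log_Gamma_add_digamma_mul_le {x y : ℝ} (hx : 0 < x) (hy : 0 < y) :
    log (Gamma x) + digamma x * (y - x) ≤ log (Gamma y) :=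
  convexOn_log_Gamma.add_mul_sub_le_of_hasDerivAt hx hy (hasDerivAt_log_Gamma hx)

theorem digamma_le_log {x : ℝ} (hx : 0 < x) : digamma x ≤ log x := by
  have := log_Gamma_add_digamma_mul_le hx (by linarith : 0 < x + 1)
  rw [Gamma_add_one hx.ne', log_mul hx.ne' (Gamma_pos_of_pos hx).ne'] at this
  linarith

theorem log_sub_one_le_digamma {x : ℝ} (hx : 1 < x) : log (x - 1) ≤ digamma x := by
  have hx1 : 0 < x - 1 := by linarith
  have := log_Gamma_add_digamma_mul_le (by linarith) hx1
  have hΓ : Gamma x = (x - 1) * Gamma (x - 1) := by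
    simpa using Gamma_add_one hx1.ne'
  rw [hΓ, log_mul hx1.ne' (Gamma_pos_of_pos hx1).ne'] at this
  linarith

theorem sub_le_sub_of_hasDerivAt_le {f g f' g' : ℝ → ℝ} {a b : ℝ} (hab : a ≤ b)
    (hf : ContinuousOn f (Icc a b)) (hg : ContinuousOn g (Icc a b))
    (hf' : ∀ y ∈ Ioo a b, HasDerivAt f (f' y) y) (hg' : ∀ y ∈ Ioo a b, HasDerivAt g (g' y) y)
    (hle : ∀ y ∈ Ioo a b, f' y ≤ g' y) : f b - f a ≤ g b - g a := by
  have hmono : MonotoneOn (g - f) (Icc a b) := by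
    refine monotoneOn_of_hasDerivWithinAt_nonneg (convex_Icc a b) (f' := g' - f') (hg.sub hf)
      (fun y hy => ?_) (fun y hy => ?_)
    · rw [interior_Icc] at hy
      exact ((hg' y hy).sub (hf' y hy)).hasDerivWithinAt
    · rw [interior_Icc] at hy
      exact sub_nonneg.2 (hle y hy)
  have := hmono (left_mem_Icc.2 hab) (right_mem_Icc.2 hab) hab
  simp only [Pi.sub_apply] at this
  linarith

theorem continuousOn_log_Gamma {a b : ℝ} (ha : 0 < a) :
    ContinuousOn (fun y => log (Gamma y)) (Icc a b) := fun _ hy =>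
  (hasDerivAt_log_Gamma (ha.trans_le hy.1)).continuousAt.continuousWithinAt

theorem log_Gamma_le {x : ℝ} (hx : 1 ≤ x) : log (Gamma x) ≤ x * log x - x + 1 := by
  have := sub_le_sub_of_hasDerivAt_le hx (continuousOn_log_Gamma one_pos)
    (continuous_mul_log.sub continuous_id).continuousOn
    (fun y hy => hasDerivAt_log_Gamma (one_pos.trans hy.1))
    (fun y hy => ((hasDerivAt_mul_log (one_pos.trans hy.1).ne').sub (hasDerivAt_id y)))
    (fun y hy => by simpa using digamma_le_log (one_pos.trans hy.1))
  simpa [Gamma_one] using this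

theorem le_log_Gamma {x : ℝ} (hx : 1 ≤ x) :
    (x - 1) * log (x - 1) - (x - 1) ≤ log (Gamma x) := by
  have := sub_le_sub_of_hasDerivAt_le hx
    ((continuous_mul_log.comp (continuous_sub_right 1)).sub (continuous_sub_right 1)).continuousOn
    (continuousOn_log_Gamma one_pos)
    (fun y hy => (((hasDerivAt_mul_log (sub_pos.2 hy.1).ne').comp y
      ((hasDerivAt_id y).sub_const 1)).sub ((hasDerivAt_id y).sub_const 1)))
    (fun y hy => hasDerivAt_log_Gamma (one_pos.trans hy.1))
    (fun y hy => by simpa using log_sub_one_le_digamma hy.1)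
  simpa [Gamma_one] using this

section DigammaEqLog

variable {x lam : ℝ}

theorem le_of_digamma_eq_log (hx : 0 < x) (h : digamma x = log lam) (hlam : 0 < lam) : lam ≤ x :=
  (log_le_log_iff hlam hx).1 (h ▸ digamma_le_log hx)

theorem log_Gamma_sub_mul_log_le (hx : 0 < x) (h : digamma x = log lam) (hlam : 1 ≤ lam) :
    log (Gamma x) - x * log lam ≤ 1 - lam := by
  have hlam0 : 0 < lam := one_pos.trans_le hlam
  have := log_Gamma_add_digamma_mul_le hx hlam0
  rw [h] at this
  linarith [log_Gamma_le hlam]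

theorem neg_sub_log_le_log_Gamma_sub_mul_log (hx : 0 < x) (h : digamma x = log lam)
    (hlam : 1 ≤ lam) :
    -lam - log lam ≤ log (Gamma x) - x * log lam := by
  have hlam0 : 0 < lam := one_pos.trans_le hlam
  have hx1 : 1 ≤ x := hlam.trans (le_of_digamma_eq_log hx h hlam0)
  have := mul_log_sub_le_mul_log_sub (sub_nonneg.2 hx1) hlam0
  linarith [le_log_Gamma hx1]

end DigammaEqLog

theorem tendsto_neg_sub_log_div_self_atTop :
    Tendsto (fun lam : ℝ => (-lam - log lam) / lam) atTop (𝓝 (-1)) := by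
  have := tendsto_const_nhds (x := (-1 : ℝ)).sub isLittleO_log_id_atTop.tendsto_div_nhds_zero
  rw [sub_zero] at this
  refine this.congr' ((eventually_ne_atTop 0).mono fun lam hlam => ?_)
  simp only [id]
  field_simp

theorem tendsto_one_sub_div_self_atTop :
    Tendsto (fun lam : ℝ => (1 - lam) / lam) atTop (𝓝 (-1)) := by
  have := (tendsto_inv_atTop_zero (𝕜 := ℝ)).sub_const 1
  rw [zero_sub] at this
  refine this.congr' ((eventually_ne_atTop 0).mono fun lam hlam => ?_)
  field_simp

theorem log_L_div_lam_tendsto_neg_one (γfun : ℝ → ℝ)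
    (hγ : ∀ lam : ℝ, 0 < lam →
      0 < γfun lam ∧ Real.exp (digamma (γfun lam)) = lam)
    (L : ℝ → ℝ)
    (hL : ∀ lam : ℝ, 0 < lam → L lam = Real.Gamma (γfun lam) / lam ^ γfun lam) :
    Filter.Tendsto (fun lam : ℝ => Real.log (L lam) / lam)
      Filter.atTop (nhds (-1)) := by
  have hlogL : ∀ lam, 0 < lam → log (L lam) = log (Gamma (γfun lam)) - γfun lam * log lam :=
    fun lam hlam => by
      rw [hL lam hlam, log_div (Gamma_pos_of_pos (hγ lam hlam).1).ne'
        (rpow_pos_of_pos hlam _).ne', log_rpow hlam]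
  have hdig : ∀ lam, 0 < lam → digamma (γfun lam) = log lam :=
    fun lam hlam => by rw [← log_exp (digamma _), (hγ lam hlam).2]
  refine tendsto_of_tendsto_of_tendsto_of_le_of_le' tendsto_neg_sub_log_div_self_atTop
    tendsto_one_sub_div_self_atTop ?_ ?_ <;>
    filter_upwards [eventually_ge_atTop 1] with lam hlam <;>
    have hlam0 : 0 < lam := one_pos.trans_le hlam <;>
    rw [hlogL lam hlam0, div_le_div_iff_of_pos_right hlam0]
  · exact neg_sub_log_le_log_Gamma_sub_mul_log (hγ lam hlam0).1 (hdig lam hlam0) hlam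
  · exact log_Gamma_sub_mul_log_le (hγ lam hlam0).1 (hdig lam hlam0) hlam
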